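/- arXiv:1401.0115 — 6 statements merged into one kernel-verified Lean document; each statement's English description precedes it below -/
import Mathlib

section
/- Let q_c = 7 − 4√3. (a) If q_c < q ≤ 1, then μ = 1 is the unique real solution of F_q(μ) = 0. (b) If 0 < q < q_c, then F_q(μ) = 0 has exactly three distinct real solutions, namely μ = 1, μ = (q − 1 − √(q² − 14q + 1))/2, and μ = (q − 1 + √(q² − 14q + 1))/2. -/
/-- The single-site mean-field map of the two-word Listener-Only Naming Game
with committed fraction `q`: `F_q(μ) = (1−q)·4μ/(μ²+3) + q − μ`. -/
noncomputable def ngF (q μ : ℝ) : ℝ := (1 - q) * (4 * μ) / (μ ^ 2 + 3) + q - μ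

lemma ngF_form (q μ : ℝ) :
    ngF q μ = (-((μ - 1) * (μ ^ 2 + (1 - q) * μ + 3 * q))) / (μ ^ 2 + 3) := by
  have h : (μ : ℝ) ^ 2 + 3 ≠ 0 := by positivity
  unfold ngF
  field_simp
  ring

/-- Let `q_c = 7 − 4√3`. (a) If `q_c < q ≤ 1`, then `μ = 1` is the unique real
solution of `F_q(μ) = 0`. (b) If `0 < q < q_c`, then `F_q(μ) = 0` has exactly
the three distinct real solutions `μ = 1`,
`μ = (q − 1 − √(q² − 14q + 1))/2` and `μ = (q − 1 + √(q² − 14q + 1))/2`. -/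
theorem ng_committed_fixed_points (q : ℝ) :
    (7 - 4 * Real.sqrt 3 < q → q ≤ 1 → ∀ μ : ℝ, ngF q μ = 0 ↔ μ = 1) ∧
    (0 < q → q < 7 - 4 * Real.sqrt 3 →
      (∀ μ : ℝ, ngF q μ = 0 ↔
        μ = 1 ∨ μ = (q - 1 - Real.sqrt (q ^ 2 - 14 * q + 1)) / 2 ∨
          μ = (q - 1 + Real.sqrt (q ^ 2 - 14 * q + 1)) / 2) ∧
      (q - 1 - Real.sqrt (q ^ 2 - 14 * q + 1)) / 2 ≠ 1 ∧
      (q - 1 + Real.sqrt (q ^ 2 - 14 * q + 1)) / 2 ≠ 1 ∧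
      (q - 1 - Real.sqrt (q ^ 2 - 14 * q + 1)) / 2 ≠
        (q - 1 + Real.sqrt (q ^ 2 - 14 * q + 1)) / 2) := by
  have hs : Real.sqrt 3 ^ 2 = 3 := Real.sq_sqrt (by norm_num)
  have hs0 : (0:ℝ) ≤ Real.sqrt 3 := Real.sqrt_nonneg 3
  set s := Real.sqrt 3 with hsdef
  constructor
  · intro h1 h2 μ
    have hden : (0:ℝ) < μ ^ 2 + 3 := by positivity
    rw [ngF_form, div_eq_zero_iff]
    have hquad : μ ^ 2 + (1 - q) * μ + 3 * q > 0 := by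
      nlinarith [sq_nonneg (2 * μ + (1 - q)), sq_nonneg s, hs, hs0, sq_nonneg (s - 2)]
    constructor
    · rintro (h | h)
      · nlinarith [hquad]
      · exact absurd h (ne_of_gt hden)
    · intro h
      left
      rw [h]; ring
  · intro hq0 hqc
    have hD : (0:ℝ) < q ^ 2 - 14 * q + 1 := by nlinarith [sq_nonneg (s - 2)]
    set r := Real.sqrt (q ^ 2 - 14 * q + 1) with hrdef
    have hr2 : r ^ 2 = q ^ 2 - 14 * q + 1 := Real.sq_sqrt hD.le
    have hr0 : 0 < r := Real.sqrt_pos.mpr hD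
    refine ⟨fun μ => ?_, ?_, ?_, ?_⟩
    · have hden : (0:ℝ) < μ ^ 2 + 3 := by positivity
      rw [ngF_form, div_eq_zero_iff]
      have hfac : μ ^ 2 + (1 - q) * μ + 3 * q
          = (μ - (q - 1 - r) / 2) * (μ - (q - 1 + r) / 2) := by
        nlinarith [hr2]
      constructor
      · rintro (h | h)
        · rw [neg_eq_zero] at h
          rcases mul_eq_zero.mp h with h' | h'
          · left; linarith [sub_eq_zero.mp h']
          · rw [hfac] at h'
            rcases mul_eq_zero.mp h' with h'' | h''
            · right; left; linarith [sub_eq_zero.mp h'']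
            · right; right; linarith [sub_eq_zero.mp h'']
        · exact absurd h (ne_of_gt hden)
      · rintro (h | h | h) <;> left <;> rw [h]
        · ring
        · linear_combination (1 - (q - 1 - r) / 2) / 4 * hr2
        · linear_combination (1 - (q - 1 + r) / 2) / 4 * hr2
    · intro h
      have : r = q - 3 := by linarith [(div_eq_one_iff_eq (by norm_num : (2:ℝ) ≠ 0)).mp h]
      nlinarith [hr0, sq_nonneg (s - 2)]
    · intro h
      have hreq : r = 3 - q := by linarith [(div_eq_one_iff_eq (by norm_num : (2:ℝ) ≠ 0)).mp h]
      nlinarith [hr2, hreq]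
    · intro h
      have : r = 0 := by
        field_simp at h
        linarith
      linarith
end

section
/- At the critical committed fraction q = q_c = 7 − 4√3, the equation F_{q_c}(μ) = 0 has exactly two real solutions: μ = 1 and the double root μ = (q_c − 1)/2 = 3 − 2√3. -/
/-- At the critical committed fraction `q_c = 7 − 4√3`, the equation
`F_{q_c}(μ) = 0` has exactly two real solutions: `μ = 1` and the double root
`μ = (q_c − 1)/2 = 3 − 2√3` (the quadratic factor is a perfect square). -/
theorem ng_committed_fixed_points_critical :
    (∀ μ : ℝ, ngF (7 - 4 * Real.sqrt 3) μ = 0 ↔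
      μ = 1 ∨ μ = 3 - 2 * Real.sqrt 3) ∧
    ((7 - 4 * Real.sqrt 3 : ℝ) - 1) / 2 = 3 - 2 * Real.sqrt 3 ∧
    (3 - 2 * Real.sqrt 3 : ℝ) ≠ 1 ∧
    (∀ μ : ℝ, μ ^ 2 + (1 - (7 - 4 * Real.sqrt 3)) * μ + 3 * (7 - 4 * Real.sqrt 3) =
      (μ - (3 - 2 * Real.sqrt 3)) ^ 2) := by
  have hs : Real.sqrt 3 ^ 2 = 3 := Real.sq_sqrt (by norm_num)
  have hs1 : (1:ℝ) < Real.sqrt 3 := by nlinarith [Real.sqrt_nonneg 3]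
  refine ⟨?_, by ring, by nlinarith, fun μ => by linear_combination (-4 : ℝ) * hs⟩
  intro μ
  have hd : μ ^ 2 + 3 ≠ 0 := by positivity
  unfold ngF
  constructor
  · intro h
    field_simp at h
    have key : (μ - 1) * (μ - (3 - 2 * Real.sqrt 3)) ^ 2 = 0 := by
      linear_combination -h + (4 * μ - 4) * hs
    rcases mul_eq_zero.1 key with h1 | h2
    · exact Or.inl (by linarith)
    · exact Or.inr (by have := pow_eq_zero_iff (n := 2) (by norm_num) |>.1 h2; linarith)
  · rintro (rfl | rfl)
    · field_simp; ring
    · field_simp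
      linear_combination (8 - 8 * Real.sqrt 3) * hs
end

section
/- For every 0 < q < q_c = 7 − 4√3, writing D = q² − 14q + 1 > 0, μ⁻ = (q − 1 − √D)/2 and μ⁺ = (q − 1 + √D)/2, one has F_q′(μ⁻) < 0 and F_q′(μ⁺) > 0; i.e., the fixed points μ = 1 and μ = μ⁻ are linearly stable while μ = μ⁺ is linearly unstable. -/
/-!
The nontrivial fixed points `μ⁻ < μ⁺` of `F_q` are the roots of `μ² + (1 - q) μ + 3q`, the
fixed-point cubic divided by `μ - 1`. On this quadratic `μ² + 3 = (1 - q)(3 - μ)`, which turns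
`F_q'(μ)` into `N(μ) / ((1 - q)(3 - μ)²)` with `N` affine of positive slope `(1 - q)(11 - q)`.
By Vieta, `N(μ⁻) N(μ⁺) = -24 (1 + q) D < 0`, so `N(μ⁻) < 0 < N(μ⁺)`.
-/

open Real

def ngQuadratic (q μ : ℝ) : ℝ := μ ^ 2 + (1 - q) * μ + 3 * q

def ngDerivNumerator (q μ : ℝ) : ℝ := 3 * (1 + 8 * q - q ^ 2) + (1 - q) * (11 - q) * μ

lemma sq_sub_fourteen_mul_add_one_pos {q : ℝ} (hq : q < 7 - 4 * √3) : 0 < q ^ 2 - 14 * q + 1 := by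
  have h48 : (4 * √3) ^ 2 = 48 := by rw [mul_pow, sq_sqrt (by norm_num)]; norm_num
  nlinarith [sqrt_nonneg 3]

lemma hasDerivAt_ngF (q μ : ℝ) :
    HasDerivAt (ngF q) (4 * (1 - q) * (3 - μ ^ 2) / (μ ^ 2 + 3) ^ 2 - 1) μ := by
  have hden : μ ^ 2 + 3 ≠ 0 := by positivity
  have h := (((((hasDerivAt_id' μ).const_mul 4).const_mul (1 - q)).div
    ((hasDerivAt_pow 2 μ).add_const 3) hden).add_const q).sub (hasDerivAt_id' μ)
  refine h.congr_deriv ?_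
  field_simp
  ring

lemma mul_deriv_ngF_of_ngQuadratic_eq_zero {q μ : ℝ} (hμ : ngQuadratic q μ = 0) :
    (1 - q) * (3 - μ) ^ 2 * deriv (ngF q) μ = ngDerivNumerator q μ := by
  unfold ngQuadratic at hμ
  have hden : μ ^ 2 + 3 = (1 - q) * (3 - μ) := by linear_combination hμ
  have hden0 : μ ^ 2 + 3 ≠ 0 := by positivity
  rw [(hasDerivAt_ngF q μ).deriv, ngDerivNumerator]
  field_simp
  rw [hden]
  linear_combination (1 - q) ^ 2 * (3 - μ) ^ 2 * (q - 5) * hμ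

lemma ngQuadratic_eq_zero_of_sq_eq {q s : ℝ} (hs : s ^ 2 = q ^ 2 - 14 * q + 1) :
    ngQuadratic q ((q - 1 - s) / 2) = 0 ∧ ngQuadratic q ((q - 1 + s) / 2) = 0 := by
  unfold ngQuadratic
  constructor <;> linear_combination hs / 4

lemma ngDerivNumerator_neg_lt_zero_lt {q s : ℝ} (hq₀ : -1 < q) (hq₁ : q < 1) (hs₀ : 0 < s)
    (hs : s ^ 2 = q ^ 2 - 14 * q + 1) :
    ngDerivNumerator q ((q - 1 - s) / 2) < 0 ∧ 0 < ngDerivNumerator q ((q - 1 + s) / 2) := by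
  have hprod : ngDerivNumerator q ((q - 1 - s) / 2) * ngDerivNumerator q ((q - 1 + s) / 2)
      = -24 * (1 + q) * s ^ 2 := by
    unfold ngDerivNumerator
    linear_combination ((96 * (1 + q) - (1 - q) ^ 2 * (11 - q) ^ 2) / 4) * hs
  have hlt : ngDerivNumerator q ((q - 1 - s) / 2) < ngDerivNumerator q ((q - 1 + s) / 2) := by
    have hgap : ngDerivNumerator q ((q - 1 + s) / 2) - ngDerivNumerator q ((q - 1 - s) / 2)
        = (1 - q) * (11 - q) * s := by
      unfold ngDerivNumerator
      ring
    have : (0 : ℝ) < 1 - q := by linarith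
    have : (0 : ℝ) < 11 - q := by linarith
    linarith [show 0 < (1 - q) * (11 - q) * s by positivity]
  have hneg : ngDerivNumerator q ((q - 1 - s) / 2) * ngDerivNumerator q ((q - 1 + s) / 2) < 0 := by
    rw [hprod]
    have : 0 < 1 + q := by linarith
    nlinarith [pow_pos hs₀ 2]
  rcases mul_neg_iff.1 hneg with ⟨hminus, hplus⟩ | hsigns
  · exact absurd (hplus.trans hminus) hlt.not_gt
  · exact hsigns

/-- For every `0 < q < q_c = 7 − 4√3`, writing `D = q² − 14q + 1 > 0`,
`μ⁻ = (q − 1 − √D)/2` and `μ⁺ = (q − 1 + √D)/2`, one has `F_q′(μ⁻) < 0` and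
`F_q′(μ⁺) > 0`; i.e. the fixed points `μ = 1` and `μ = μ⁻` are linearly stable
while `μ = μ⁺` is linearly unstable. -/
theorem ng_committed_roots_stability (q : ℝ)
    (hq0 : 0 < q) (hqc : q < 7 - 4 * Real.sqrt 3) :
    0 < q ^ 2 - 14 * q + 1 ∧
    deriv (ngF q) ((q - 1 - Real.sqrt (q ^ 2 - 14 * q + 1)) / 2) < 0 ∧
    deriv (ngF q) ((q - 1 + Real.sqrt (q ^ 2 - 14 * q + 1)) / 2) > 0 := by
  have hq1 : q < 1 := by
    nlinarith [sq_sqrt (show (0 : ℝ) ≤ 3 by norm_num), sqrt_nonneg 3]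
  have hD : 0 < q ^ 2 - 14 * q + 1 := sq_sub_fourteen_mul_add_one_pos hqc
  set s := √(q ^ 2 - 14 * q + 1)
  have hs₀ : 0 < s := sqrt_pos.2 hD
  have hs : s ^ 2 = q ^ 2 - 14 * q + 1 := sq_sqrt hD.le
  obtain ⟨hrootMinus, hrootPlus⟩ := ngQuadratic_eq_zero_of_sq_eq hs
  obtain ⟨hNMinus, hNPlus⟩ := ngDerivNumerator_neg_lt_zero_lt (by linarith) hq1 hs₀ hs
  have hfactor : ∀ μ, 0 ≤ (1 - q) * (3 - μ) ^ 2 := fun μ => by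
    have := sub_nonneg.2 hq1.le
    positivity
  refine ⟨hD, neg_of_mul_neg_right ?_ (hfactor ((q - 1 - s) / 2)),
    pos_of_mul_pos_right ?_ (hfactor ((q - 1 + s) / 2))⟩
  · rwa [mul_deriv_ngF_of_ngQuadratic_eq_zero hrootMinus]
  · rwa [mul_deriv_ngF_of_ngQuadratic_eq_zero hrootPlus]
end

section
/- For every q with q_c < q ≤ 1 (where q_c = 7 − 4√3) and every μ ∈ [−1, 1), one has F_q(μ) > 0; hence above the critical committed fraction the mean-field dynamics drives the local mean opinion monotonically toward the committed consensus μ = 1. -/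
/-- For every `q` with `q_c < q ≤ 1` (`q_c = 7 − 4√3`) and every `μ ∈ [−1, 1)`,
one has `F_q(μ) > 0`: above the critical committed fraction the mean-field
dynamics drives the local mean opinion monotonically toward `μ = 1`. -/
theorem ng_committed_supercritical_positive (q : ℝ)
    (hqc : 7 - 4 * Real.sqrt 3 < q) (hq1 : q ≤ 1)
    (μ : ℝ) (hμ : μ ∈ Set.Ico (-1 : ℝ) 1) :
    0 < ngF q μ := by
  obtain ⟨hμ1, hμ2⟩ := hμ
  have hs : Real.sqrt 3 ^ 2 = 3 := Real.sq_sqrt (by norm_num)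
  have hs0 : (0:ℝ) ≤ Real.sqrt 3 := Real.sqrt_nonneg 3
  have hs1 : (3:ℝ)/2 < Real.sqrt 3 := by nlinarith [hs, hs0]
  have hdisc : q ^ 2 - 14 * q + 1 < 0 := by
    have h1 : 0 < q - (7 - 4 * Real.sqrt 3) := by linarith
    have h2 : q - (7 + 4 * Real.sqrt 3) < 0 := by nlinarith
    nlinarith [mul_pos h1 (neg_pos.mpr h2)]
  have hd : (0:ℝ) < μ ^ 2 + 3 := by positivity
  have hquad : 0 < μ ^ 2 + (1 - q) * μ + 3 * q := by
    nlinarith [sq_nonneg (2 * μ + 1 - q)]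
  have hN : 0 < (1 - μ) * (μ ^ 2 + (1 - q) * μ + 3 * q) :=
    mul_pos (by linarith) hquad
  have heq : ngF q μ = (1 - μ) * (μ ^ 2 + (1 - q) * μ + 3 * q) / (μ ^ 2 + 3) := by
    unfold ngF
    field_simp
    ring
  rw [heq]
  exact div_pos hN hd
end

section
/- For every f ∈ [0,1] there exists a constant C > 0 such that for all t ≥ 0 and all x ∈ ℝ², ‖exp(−t·M(f))·x‖ ≤ C·e^{−t/2}·‖x‖; in particular every solution of the linearized mean-field equation δn′(t) = −M(f)·δn(t) converges to 0 exponentially fast with rate at least 1/2, uniformly in f. -/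
/-- `M(f) = [[1, f], [1−f, 1]]`, the negative of the Jacobian of the mean-field
Naming Game dynamics. -/
def NG_M (f : ℝ) : Matrix (Fin 2) (Fin 2) ℝ := !![1, f; 1 - f, 1]

/-!
Write `M(f) = 1 + N(f)` with `N(f)` the off-diagonal part. Then `N(f)² = f(1 − f) • 1` and
`f(1 − f) ≤ 1/4`, so in the `ℓ∞` operator norm `‖N(f)ⁿ‖ ≤ 2 · 2⁻ⁿ`. Summing the exponential
series gives `‖exp(−t N(f))‖ ≤ 2 e^{t/2}`, and `exp(−t M(f)) = e^{−t} exp(−t N(f))`.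
-/

open NormedSpace
open scoped Nat

section NormedAlgebra

variable {A : Type*} [NormedRing A] [NormedAlgebra ℝ A]

theorem norm_exp_le_of_norm_pow_le (a : A) {K r : ℝ} (h : ∀ n : ℕ, ‖a ^ n‖ ≤ K * r ^ n) :
    ‖exp a‖ ≤ K * Real.exp r := by
  have hsum : Summable fun n : ℕ => ‖(n !⁻¹ : ℝ) • a ^ n‖ := norm_expSeries_summable' a
  have hterm (n : ℕ) : ‖(n !⁻¹ : ℝ) • a ^ n‖ ≤ K * (r ^ n / n !) := by
    rw [norm_smul, Real.norm_of_nonneg (by positivity), inv_mul_eq_div, mul_div_assoc']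
    gcongr
    exact h n
  rw [exp_eq_tsum ℝ, Real.exp_eq_exp_ℝ, exp_eq_tsum_div, ← tsum_mul_left]
  exact (norm_tsum_le_tsum_norm hsum).trans
    (hsum.tsum_le_tsum hterm ((Real.summable_pow_div_factorial r).mul_left K))

theorem norm_exp_smul_le_of_norm_pow_le (a : A) (t : ℝ) {K r : ℝ}
    (h : ∀ n : ℕ, ‖a ^ n‖ ≤ K * r ^ n) : ‖exp (t • a)‖ ≤ K * Real.exp (|t| * r) := by
  refine norm_exp_le_of_norm_pow_le _ fun n => ?_
  calc ‖(t • a) ^ n‖ = |t| ^ n * ‖a ^ n‖ := by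
        rw [smul_pow, norm_smul, norm_pow, Real.norm_eq_abs]
    _ ≤ |t| ^ n * (K * r ^ n) := by gcongr; exact h n
    _ = K * (|t| * r) ^ n := by ring

theorem norm_pow_le_of_sq_eq_smul_one [NormOneClass A] {a : A} {c r : ℝ}
    (ha : a ^ 2 = c • 1) (hc : |c| ≤ r ^ 2) (hnorm : ‖a‖ ≤ 2 * r) (n : ℕ) :
    ‖a ^ n‖ ≤ 2 * r ^ n := by
  have hr : 0 ≤ r := by linarith [norm_nonneg a]
  have heven (k : ℕ) : ‖a ^ (2 * k)‖ ≤ r ^ (2 * k) := by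
    rw [pow_mul, pow_mul, ha, smul_pow, one_pow, norm_smul, norm_one, mul_one, norm_pow,
      Real.norm_eq_abs]
    exact pow_le_pow_left₀ (abs_nonneg c) hc k
  obtain ⟨k, rfl | rfl⟩ := Nat.even_or_odd' n
  · linarith [heven k, pow_nonneg hr (2 * k)]
  · calc ‖a ^ (2 * k + 1)‖ ≤ ‖a ^ (2 * k)‖ * ‖a‖ := by rw [pow_succ]; exact norm_mul_le _ _
      _ ≤ r ^ (2 * k) * (2 * r) := by gcongr; exact heven k
      _ = 2 * r ^ (2 * k + 1) := by ring

end NormedAlgebra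

theorem Matrix.exp_smul_one_add {m : Type*} [Fintype m] [DecidableEq m] (t : ℝ)
    (B : Matrix m m ℝ) : exp (t • (1 + B)) = Real.exp t • exp (t • B) := by
  have hcomm : Commute (t • (1 : Matrix m m ℝ)) (t • B) :=
    ((Commute.one_left B).smul_left t).smul_right t
  have hscalar : exp (t • (1 : Matrix m m ℝ)) = Real.exp t • 1 := by
    rw [Matrix.smul_one_eq_diagonal, Matrix.exp_diagonal, Pi.exp_def, ← Real.exp_eq_exp_ℝ,
      ← Matrix.smul_one_eq_diagonal]
  rw [smul_add, Matrix.exp_add_of_commute _ _ hcomm, hscalar, smul_one_mul]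

def NG_offDiag (f : ℝ) : Matrix (Fin 2) (Fin 2) ℝ := !![0, f; 1 - f, 0]

theorem NG_M_eq_one_add (f : ℝ) : NG_M f = 1 + NG_offDiag f := by
  ext i j
  fin_cases i <;> fin_cases j <;> simp [NG_M, NG_offDiag]

theorem NG_offDiag_sq (f : ℝ) : NG_offDiag f ^ 2 = (f * (1 - f)) • 1 := by
  ext i j
  fin_cases i <;> fin_cases j <;> simp [NG_offDiag, sq, Matrix.mul_apply, Fin.sum_univ_two]
  ring

open scoped Matrix.Norms.Operator in
theorem norm_NG_offDiag_le_one {f : ℝ} (hf : f ∈ Set.Icc (0 : ℝ) 1) : ‖NG_offDiag f‖ ≤ 1 := by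
  obtain ⟨hf0, hf1⟩ := hf
  rw [Matrix.linfty_opNorm_def, NNReal.coe_le_one, Finset.sup_le_iff]
  simp only [Finset.mem_univ, forall_const, Fin.forall_fin_two, Fin.sum_univ_two, NG_offDiag,
    Matrix.of_apply, Matrix.cons_val', Matrix.cons_val_fin_one, Matrix.cons_val_zero,
    Matrix.cons_val_one, nnnorm_zero, zero_add, add_zero, ← NNReal.coe_le_coe, coe_nnnorm,
    NNReal.coe_one, Real.norm_eq_abs, abs_le]
  refine ⟨⟨?_, ?_⟩, ?_, ?_⟩ <;> linarith

/-- For every `f ∈ [0,1]` there is `C > 0` such that for all `t ≥ 0` and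
`x : ℝ²`, `‖exp(−t·M(f))·x‖ ≤ C·e^{−t/2}·‖x‖`: every solution of the
linearized mean-field equation `δn′ = −M(f)·δn` decays exponentially with rate
at least `1/2`. -/
theorem ng_linearized_exponential_decay (f : ℝ) (hf : f ∈ Set.Icc (0 : ℝ) 1) :
    ∃ C : ℝ, 0 < C ∧ ∀ t : ℝ, 0 ≤ t → ∀ x : Fin 2 → ℝ,
      ‖(NormedSpace.exp ((-t) • NG_M f)).mulVec x‖ ≤
        C * Real.exp (-t / 2) * ‖x‖ := by
  open scoped Matrix.Norms.Operator in
  have hpow (n : ℕ) : ‖NG_offDiag f ^ n‖ ≤ 2 * (1 / 2) ^ n := by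
    refine norm_pow_le_of_sq_eq_smul_one (NG_offDiag_sq f) ?_
      (by linarith [norm_NG_offDiag_le_one hf]) n
    rw [abs_of_nonneg (mul_nonneg hf.1 (sub_nonneg.2 hf.2))]
    nlinarith [sq_nonneg (2 * f - 1)]
  refine ⟨2, two_pos, fun t ht x => ?_⟩
  open scoped Matrix.Norms.Operator in
  calc ‖(exp ((-t) • NG_M f)).mulVec x‖ ≤ ‖exp ((-t) • NG_M f)‖ * ‖x‖ :=
        Matrix.linfty_opNorm_mulVec _ _
    _ = Real.exp (-t) * ‖exp ((-t) • NG_offDiag f)‖ * ‖x‖ := by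
      rw [NG_M_eq_one_add, Matrix.exp_smul_one_add, norm_smul,
        Real.norm_of_nonneg (Real.exp_pos _).le]
    _ ≤ Real.exp (-t) * (2 * Real.exp (|-t| * (1 / 2))) * ‖x‖ := by
      gcongr
      exact norm_exp_smul_le_of_norm_pow_le _ _ hpow
    _ = 2 * Real.exp (-t / 2) * ‖x‖ := by
      rw [abs_neg, abs_of_nonneg ht, mul_left_comm, ← Real.exp_add]
      ring_nf
end

section
/- Let f : [0,∞) → [0,1] be continuous and let n = (n_A, n_B) : [0,∞) → ℝ² be differentiable with n′(t) = G(n(t); f(t)) for all t ≥ 0. If n_A(0) ≥ 0, n_B(0) ≥ 0 and n_A(0) + n_B(0) ≤ 1, then for all t ≥ 0 one has n_A(t) ≥ 0, n_B(t) ≥ 0 and n_A(t) + n_B(t) ≤ 1; i.e., the simplex of admissible opinion concentrations is forward invariant under the mean-field Naming Game dynamics. -/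
/-- The two-word Listener-Only Naming Game mean-field vector field at local
influence probability `f`:
`G (nA, nB; f) = (f − nA − f·nB, (1−f) − (1−f)·nA − nB)`. -/
def NG_G (f nA nB : ℝ) : ℝ × ℝ :=
  (f - nA - f * nB, (1 - f) - (1 - f) * nA - nB)

/-!
In the coordinates `(n_A, n_B, 1 - n_A - n_B)` the dynamics is linear, `y' = A(t) y`, with a
Metzler matrix `A(t)` (nonnegative off-diagonal entries) whose row sums are at most `K = 1`.
For such systems the largest negative part `h = ‖y⁻‖_∞` satisfies `D⁺h ≤ K h`: at a coordinate
with `y_i = -h` one has `-y_i' = ∑ⱼ A_ij (-y_j) ≤ (∑ⱼ A_ij) h`. Grönwall's inequality with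
`h(0) = 0` then forces `h ≡ 0`.
-/
open Set Filter Topology Matrix

theorem HasDerivWithinAt.eventually_lt_add_mul_sub {g : ℝ → ℝ} {g' c r x : ℝ}
    (hg : HasDerivWithinAt g g' (Ici x) x) (hc : g x ≤ c) (hr : g x = c → g' < r) :
    ∀ᶠ z in 𝓝[>] x, g z < c + r * (z - x) := by
  have hline : HasDerivWithinAt (fun z => c + r * (z - x)) r (Ici x) x := by
    simpa using (((hasDerivWithinAt_id x (Ici x)).sub_const x).const_mul r).const_add c
  have hφ : HasDerivWithinAt (fun z => g z - (c + r * (z - x))) (g' - r) (Ici x) x :=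
    hg.sub hline
  suffices ∀ᶠ z in 𝓝[>] x, g z - (c + r * (z - x)) < 0 by
    filter_upwards [this] with z hz
    linarith
  rcases hc.lt_or_eq with hlt | heq
  · exact (hφ.continuousWithinAt.mono Ioi_subset_Ici_self).eventually_lt_const
      (by simpa using hlt)
  · filter_upwards [hφ.Ioi_of_Ici.limsup_slope_le' (lt_irrefl x) (sub_neg.2 (hr heq)),
      self_mem_nhdsWithin] with z hslope hz
    rw [slope_def_field, div_lt_iff₀ (sub_pos.2 hz)] at hslope
    simpa [heq] using hslope

theorem continuous_negPart_pi {ι : Type*} : Continuous fun v : ι → ℝ => v⁻ :=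
  continuous_pi fun i => continuous_negPart.comp (continuous_apply i)

section NegPart

variable {ι : Type*} [Fintype ι]

theorem neg_le_norm_negPart (v : ι → ℝ) (i : ι) : -v i ≤ ‖v⁻‖ :=
  calc -v i ≤ (v i)⁻ := neg_le_negPart _
    _ ≤ ‖v⁻ i‖ := Real.le_norm_self _
    _ ≤ ‖v⁻‖ := norm_le_pi_norm _ i

theorem eventually_norm_negPart_lt {y : ℝ → ι → ℝ} {y' : ι → ℝ} {x r : ℝ}
    (hy : HasDerivWithinAt y y' (Ici x) x) (hr : 0 < r)
    (hy' : ∀ i, -y x i = ‖(y x)⁻‖ → -y' i < r) :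
    ∀ᶠ z in 𝓝[>] x, ‖(y z)⁻‖ < ‖(y x)⁻‖ + r * (z - x) := by
  have hpos : ∀ᶠ z in 𝓝[>] x, 0 < ‖(y x)⁻‖ + r * (z - x) := by
    filter_upwards [self_mem_nhdsWithin] with z (hz : x < z)
    have := mul_pos hr (sub_pos.2 hz)
    positivity
  have hcoord : ∀ i, ∀ᶠ z in 𝓝[>] x, -y z i < ‖(y x)⁻‖ + r * (z - x) := fun i =>
    (hasDerivWithinAt_pi.1 hy i).neg.eventually_lt_add_mul_sub
      (neg_le_norm_negPart _ i) (hy' i)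
  filter_upwards [hpos, eventually_all.2 hcoord] with z hz hzi
  refine (pi_norm_lt_iff hz).2 fun i => ?_
  rw [Pi.negPart_apply, Real.norm_of_nonneg (negPart_nonneg _), negPart_def]
  exact max_lt (hzi i) hz

end NegPart

theorem Matrix.neg_mulVec_apply_le {ι : Type*} [Fintype ι] {A : Matrix ι ι ℝ} {v : ι → ℝ}
    {c K : ℝ} {i : ι} (hA : ∀ j, j ≠ i → 0 ≤ A i j) (hK : ∑ j, A i j ≤ K) (hc : 0 ≤ c)
    (hv : ∀ j, -v j ≤ c) (hi : -v i = c) : -(A *ᵥ v) i ≤ K * c :=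
  calc -(A *ᵥ v) i = ∑ j, A i j * -v j := by
        simp [mulVec, dotProduct, Finset.sum_neg_distrib]
    _ ≤ ∑ j, A i j * c := Finset.sum_le_sum fun j _ => by
        rcases eq_or_ne j i with rfl | hj
        · rw [hi]
        · exact mul_le_mul_of_nonneg_left (hv j) (hA j hj)
    _ = (∑ j, A i j) * c := (Finset.sum_mul ..).symm
    _ ≤ K * c := mul_le_mul_of_nonneg_right hK hc

theorem nonneg_of_hasDerivWithinAt_mulVec {ι : Type*} [Fintype ι] {y : ℝ → ι → ℝ}
    {A : ℝ → Matrix ι ι ℝ} {a K : ℝ}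
    (hy : ∀ t ∈ Ici a, HasDerivWithinAt y (A t *ᵥ y t) (Ici a) t)
    (hA : ∀ t ∈ Ici a, ∀ i j, i ≠ j → 0 ≤ A t i j)
    (hK : ∀ t ∈ Ici a, ∀ i, ∑ j, A t i j ≤ K) (ha : 0 ≤ y a) :
    ∀ t ∈ Ici a, 0 ≤ y t := by
  intro t ht
  have hcont : ContinuousOn (fun s => ‖(y s)⁻‖) (Icc a t) :=
    (continuous_norm.comp continuous_negPart_pi).comp_continuousOn fun s hs =>
      (hy s hs.1).continuousWithinAt.mono Icc_subset_Ici_self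
  -- `max K 0` rather than `K`: then every slope bound `r` is positive.
  have hdini : ∀ x ∈ Ico a t, ∀ r, max K 0 * ‖(y x)⁻‖ < r →
      ∃ᶠ z in 𝓝[>] x, (z - x)⁻¹ * (‖(y z)⁻‖ - ‖(y x)⁻‖) < r := by
    intro x hx r hr
    have hx : x ∈ Ici a := hx.1
    have hr0 : 0 < r := lt_of_le_of_lt (by positivity) hr
    have hactive : ∀ i, -y x i = ‖(y x)⁻‖ → -(A x *ᵥ y x) i < r := fun i hi =>
      (neg_mulVec_apply_le (fun j hj => hA x hx i j hj.symm) ((hK x hx i).trans (le_max_left _ _))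
        (norm_nonneg _) (neg_le_norm_negPart _) hi).trans_lt hr
    have hlt := eventually_norm_negPart_lt ((hy x hx).mono (Ici_subset_Ici.2 hx)) hr0 hactive
    refine (hlt.and self_mem_nhdsWithin).frequently.mono fun z ⟨hz, (hzx : x < z)⟩ => ?_
    rw [inv_mul_lt_iff₀ (sub_pos.2 hzx)]
    linarith
  have h := le_gronwallBound_of_liminf_deriv_right_le (δ := 0) (ε := 0) hcont hdini
    (by simp [negPart_eq_zero.2 ha]) (fun _ _ => (add_zero _).ge) t ⟨ht, le_rfl⟩
  rw [gronwallBound_ε0_δ0] at h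
  exact negPart_eq_zero.1 (norm_le_zero_iff.1 h)

def ngMatrix (p : ℝ) : Matrix (Fin 3) (Fin 3) ℝ :=
  !![-(1 - p), 0, p; 0, -p, 1 - p; 1 - p, p, -1]

theorem ngMatrix_mulVec (p a b : ℝ) :
    ngMatrix p *ᵥ ![a, b, 1 - a - b] =
      ![(NG_G p a b).1, (NG_G p a b).2, -((NG_G p a b).1 + (NG_G p a b).2)] := by
  ext i
  fin_cases i <;> simp [ngMatrix, NG_G, mulVec, dotProduct, Fin.sum_univ_three] <;> ring

theorem ngMatrix_nonneg_of_ne {p : ℝ} (hp : p ∈ Icc (0 : ℝ) 1) {i j : Fin 3} (hij : i ≠ j) :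
    0 ≤ ngMatrix p i j := by
  obtain ⟨hp0, hp1⟩ := hp
  fin_cases i <;> fin_cases j <;> simp_all [ngMatrix]

theorem sum_ngMatrix_le_one {p : ℝ} (hp : p ∈ Icc (0 : ℝ) 1) (i : Fin 3) :
    ∑ j, ngMatrix p i j ≤ 1 := by
  obtain ⟨hp0, hp1⟩ := hp
  fin_cases i <;> simp [ngMatrix, Fin.sum_univ_three] <;> linarith

theorem HasDerivWithinAt.simplexCoords {a b : ℝ → ℝ} {d : ℝ × ℝ} {s : Set ℝ} {t : ℝ}
    (h : HasDerivWithinAt (fun u => (a u, b u)) d s t) :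
    HasDerivWithinAt (fun u => ![a u, b u, 1 - a u - b u]) ![d.1, d.2, -(d.1 + d.2)] s t := by
  have ha : HasDerivWithinAt a d.1 s t := by simpa using h.hasFDerivWithinAt.fst.hasDerivWithinAt
  have hb : HasDerivWithinAt b d.2 s t := by simpa using h.hasFDerivWithinAt.snd.hasDerivWithinAt
  refine hasDerivWithinAt_pi.2 fun i => ?_
  fin_cases i
  · simpa using ha
  · simpa using hb
  · simpa [sub_sub, neg_add] using (ha.add hb).const_sub 1

theorem ng_simplex_forward_invariant_general (f nA nB : ℝ → ℝ)
    (hf01 : ∀ t ∈ Set.Ici (0 : ℝ), f t ∈ Set.Icc (0 : ℝ) 1)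
    (hode : ∀ t ∈ Set.Ici (0 : ℝ),
      HasDerivWithinAt (fun u => (nA u, nB u)) (NG_G (f t) (nA t) (nB t))
        (Set.Ici (0 : ℝ)) t)
    (hA0 : 0 ≤ nA 0) (hB0 : 0 ≤ nB 0) (hsum0 : nA 0 + nB 0 ≤ 1) :
    ∀ t ∈ Set.Ici (0 : ℝ), 0 ≤ nA t ∧ 0 ≤ nB t ∧ nA t + nB t ≤ 1 := by
  have hy := nonneg_of_hasDerivWithinAt_mulVec (y := fun t => ![nA t, nB t, 1 - nA t - nB t])
    (A := fun t => ngMatrix (f t)) (K := 1)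
    (fun t ht => by simpa only [ngMatrix_mulVec] using (hode t ht).simplexCoords)
    (fun t ht _ _ => ngMatrix_nonneg_of_ne (hf01 t ht))
    (fun t ht => sum_ngMatrix_le_one (hf01 t ht))
    (fun i => by fin_cases i <;> simp <;> linarith)
  intro t ht
  have h0 := hy t ht 0
  have h1 := hy t ht 1
  have h2 := hy t ht 2
  simp only [Pi.zero_apply, Matrix.cons_val] at h0 h1 h2
  exact ⟨h0, h1, by linarith⟩

/-- Forward invariance of the simplex of admissible opinion concentrations:
if `f : [0,∞) → [0,1]` is continuous and `(nA, nB)` solves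
`n′(t) = G(n(t); f(t))` on `[0,∞)` with `nA(0) ≥ 0`, `nB(0) ≥ 0`,
`nA(0) + nB(0) ≤ 1`, then `nA(t) ≥ 0`, `nB(t) ≥ 0`, `nA(t) + nB(t) ≤ 1`
for all `t ≥ 0`. -/
theorem ng_simplex_forward_invariant (f nA nB : ℝ → ℝ)
    (hfc : ContinuousOn f (Set.Ici (0 : ℝ)))
    (hf01 : ∀ t ∈ Set.Ici (0 : ℝ), f t ∈ Set.Icc (0 : ℝ) 1)
    (hode : ∀ t ∈ Set.Ici (0 : ℝ),
      HasDerivWithinAt (fun u => (nA u, nB u)) (NG_G (f t) (nA t) (nB t))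
        (Set.Ici (0 : ℝ)) t)
    (hA0 : 0 ≤ nA 0) (hB0 : 0 ≤ nB 0) (hsum0 : nA 0 + nB 0 ≤ 1) :
    ∀ t ∈ Set.Ici (0 : ℝ), 0 ≤ nA t ∧ 0 ≤ nB t ∧ nA t + nB t ≤ 1 :=
  ng_simplex_forward_invariant_general f nA nB hf01 hode hA0 hB0 hsum0
end
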